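/- arXiv:1811.11023 — 3 statements merged into one kernel-verified Lean document; each statement's English description precedes it below -/
import Mathlib

section
/- Let P be a finite chordal polynomial set in K[x_1,...,x_n] such that x_1 < ... < x_n is a perfect elimination ordering of G(P), and let red̄_i(P) for i = n, ..., 1 be obtained from P by any sequence of reduction steps. Then for each i = n, ..., 1 and any two distinct variables x_p and x_q, if there exists an index k such that x_p, x_q ∈ supp(red̄_i(P)^(k)), then {x_p, x_q} is an edge of G(P). -/
open MvPolynomial

variable {K : Type*} [Field K] {n : ℕ}

/-- The set of variables effectively appearing in a polynomial. -/
def psupp (F : MvPolynomial (Fin n) K) : Set (Fin n) := ↑F.vars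

/-- The set of variables appearing in a set of polynomials. -/
def ssupp (P : Set (MvPolynomial (Fin n) K)) : Set (Fin n) :=
  ⋃ F ∈ P, psupp F

/-- Adjacency in the associated graph `G(P)`: `p ≠ q` and some polynomial of `P`
contains both variables. -/
def adjG (P : Set (MvPolynomial (Fin n) K)) (p q : Fin n) : Prop :=
  p ≠ q ∧ ∃ F ∈ P, p ∈ psupp F ∧ q ∈ psupp F

/-- `G(P) ⊆ G(Q)`: every edge of `G(P)` is an edge of `G(Q)`. -/
def subG (P Q : Set (MvPolynomial (Fin n) K)) : Prop :=
  ∀ p q, adjG P p q → adjG Q p q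

/-- The natural ordering `x_1 < ... < x_n` of the variables is a perfect elimination
ordering of `G(P)`; in particular `G(P)` is chordal. -/
def isPEO (P : Set (MvPolynomial (Fin n) K)) : Prop :=
  ∀ p q k : Fin n, p < k → q < k → p ≠ q → adjG P p k → adjG P q k → adjG P p q

/-- `F` is nonconstant with leading variable `x_k`. -/
def hasLv (F : MvPolynomial (Fin n) K) (k : Fin n) : Prop :=
  k ∈ psupp F ∧ ∀ j ∈ psupp F, j ≤ k

/-- `P^(k)`: the polynomials of `P` with leading variable `x_k`. -/
def levelSet (P : Set (MvPolynomial (Fin n) K)) (k : Fin n) :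
    Set (MvPolynomial (Fin n) K) :=
  {F | F ∈ P ∧ hasLv F k}

/-- A reduction step at level `i` with chosen polynomial `T` and produced set `R`:
`T` is nonconstant with leading variable `x_i` and `supp T ⊆ supp (P^(i))`, `R` is a
finite set of polynomials with `supp R ⊆ supp (P^(i)) \ {x_i}`, and the result is
`(P \ P^(i)) ∪ {T} ∪ R`. -/
def RedStep (i : Fin n) (T : MvPolynomial (Fin n) K) (R : Set (MvPolynomial (Fin n) K))
    (P P' : Set (MvPolynomial (Fin n) K)) : Prop :=
  hasLv T i ∧ psupp T ⊆ ssupp (levelSet P i) ∧ R.Finite ∧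
    ssupp R ⊆ ssupp (levelSet P i) \ {i} ∧
    P' = (P \ levelSet P i) ∪ {T} ∪ R

/-- A reduction step at level `i` with arbitrary choices (identity if `P^(i) = ∅`). -/
def RedStepAny (i : Fin n) (P P' : Set (MvPolynomial (Fin n) K)) : Prop :=
  (levelSet P i = ∅ ∧ P' = P) ∨ ∃ T R, RedStep i T R P P'

/-!
The invariant is that the support of every level set `Q^(k)` of `Q = red̄_i(P)` is a clique
of `G(P)`. Given `F ∈ Q^(k)`, every variable `x_p` of `F` satisfies `x_p ≤ x_k`, so for two
variables `x_p, x_q` of the level it suffices to join each of them to `x_k`: the perfect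
elimination ordering then closes the triangle. For `Q = P` the edge `{x_p, x_k}` comes from
`F` itself. A reduction step at level `i` keeps the polynomials of the other levels and puts
the variables of `T_i` and `R_i` inside `supp(Q^(i))`, so every variable of a new polynomial
with leading variable `x_k` shares an old level set with `x_k`, which is a clique by induction.
-/

def LevelSuppIsClique (P Q : Set (MvPolynomial (Fin n) K)) : Prop :=
  ∀ k p q : Fin n, p ≠ q → p ∈ ssupp (levelSet Q k) → q ∈ ssupp (levelSet Q k) → adjG P p q

lemma adjG.symm {P : Set (MvPolynomial (Fin n) K)} {p q : Fin n} (h : adjG P p q) :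
    adjG P q p :=
  ⟨h.1.symm, h.2.imp fun _ ⟨hF, hp, hq⟩ => ⟨hF, hq, hp⟩⟩

lemma mem_ssupp_iff {Q : Set (MvPolynomial (Fin n) K)} {p : Fin n} :
    p ∈ ssupp Q ↔ ∃ F ∈ Q, p ∈ psupp F := by
  simp [ssupp]

lemma mem_ssupp_levelSet_iff {Q : Set (MvPolynomial (Fin n) K)} {k p : Fin n} :
    p ∈ ssupp (levelSet Q k) ↔ ∃ F ∈ Q, hasLv F k ∧ p ∈ psupp F := by
  simp [ssupp, levelSet, and_assoc]

lemma hasLv.unique {F : MvPolynomial (Fin n) K} {k k' : Fin n} (h : hasLv F k)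
    (h' : hasLv F k') : k = k' :=
  le_antisymm (h'.2 k h.1) (h.2 k' h'.1)

lemma isPEO.adjG_of_eq_or_adjG {P : Set (MvPolynomial (Fin n) K)} (hpeo : isPEO P)
    {p q k : Fin n} (hpq : p ≠ q) (hpk : p ≤ k) (hqk : q ≤ k)
    (hp : p = k ∨ adjG P p k) (hq : q = k ∨ adjG P q k) : adjG P p q := by
  rcases hp with rfl | hp <;> rcases hq with rfl | hq
  · exact absurd rfl hpq
  · exact hq.symm
  · exact hp
  · exact hpeo p q k (lt_of_le_of_ne hpk hp.1) (lt_of_le_of_ne hqk hq.1) hpq hp hq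

lemma isPEO.levelSuppIsClique {P Q : Set (MvPolynomial (Fin n) K)} (hpeo : isPEO P)
    (hlv : ∀ F ∈ Q, ∀ k p, hasLv F k → p ∈ psupp F → p ≠ k → adjG P p k) :
    LevelSuppIsClique P Q := by
  intro k p q hpq hp hq
  obtain ⟨F, hF, hFk, hpF⟩ := mem_ssupp_levelSet_iff.1 hp
  obtain ⟨G, hG, hGk, hqG⟩ := mem_ssupp_levelSet_iff.1 hq
  exact hpeo.adjG_of_eq_or_adjG hpq (hFk.2 p hpF) (hGk.2 q hqG)
    ((eq_or_ne p k).imp_right (hlv F hF k p hFk hpF))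
    ((eq_or_ne q k).imp_right (hlv G hG k q hGk hqG))

lemma levelSuppIsClique_self {P : Set (MvPolynomial (Fin n) K)} (hpeo : isPEO P) :
    LevelSuppIsClique P P :=
  hpeo.levelSuppIsClique fun F hF _ _ hFk hpF hpk => ⟨hpk, F, hF, hpF, hFk.1⟩

lemma RedStep.exists_levelSet_of_mem {i : Fin n} {T : MvPolynomial (Fin n) K}
    {R Q Q' : Set (MvPolynomial (Fin n) K)} (hred : RedStep i T R Q Q')
    {F : MvPolynomial (Fin n) K} (hF : F ∈ Q') {k p : Fin n} (hFk : hasLv F k)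
    (hpF : p ∈ psupp F) :
    ∃ m, p ∈ ssupp (levelSet Q m) ∧ k ∈ ssupp (levelSet Q m) := by
  obtain ⟨hT, hTsupp, -, hRsupp, rfl⟩ := hred
  rcases hF with (⟨hFQ, -⟩ | rfl) | hFR
  · exact ⟨k, mem_ssupp_levelSet_iff.2 ⟨F, hFQ, hFk, hpF⟩,
      mem_ssupp_levelSet_iff.2 ⟨F, hFQ, hFk, hFk.1⟩⟩
  · obtain rfl : k = i := hFk.unique hT
    exact ⟨k, hTsupp hpF, hTsupp hFk.1⟩
  · exact ⟨i, (hRsupp (mem_ssupp_iff.2 ⟨F, hFR, hpF⟩)).1,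
      (hRsupp (mem_ssupp_iff.2 ⟨F, hFR, hFk.1⟩)).1⟩

lemma RedStepAny.levelSuppIsClique {P Q Q' : Set (MvPolynomial (Fin n) K)} {i : Fin n}
    (hpeo : isPEO P) (hred : RedStepAny i Q Q') (hQ : LevelSuppIsClique P Q) :
    LevelSuppIsClique P Q' := by
  rcases hred with ⟨-, rfl⟩ | ⟨T, R, hred⟩
  · exact hQ
  · refine hpeo.levelSuppIsClique fun F hF k p hFk hpF hpk => ?_
    obtain ⟨m, hpm, hkm⟩ := hred.exists_levelSet_of_mem hF hFk hpF
    exact hQ m p k hpk hpm hkm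

theorem statement3_general {K : Type*} [Field K] {n : ℕ}
    (P : Set (MvPolynomial (Fin n) K)) (hpeo : isPEO P)
    (S : ℕ → Set (MvPolynomial (Fin n) K)) (hSn : S n = P)
    (hstep : ∀ i (h : i < n), RedStepAny ⟨i, h⟩ (S (i + 1)) (S i)) :
    ∀ i ≤ n, ∀ k p q : Fin n, p ≠ q →
      p ∈ ssupp (levelSet (S i) k) → q ∈ ssupp (levelSet (S i) k) →
      adjG P p q := by
  intro i hi
  have hSn_clique : LevelSuppIsClique P (S n) := by
    rw [hSn]; exact levelSuppIsClique_self hpeo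
  exact Nat.decreasingInduction (motive := fun i _ => LevelSuppIsClique P (S i))
    (fun i hi ih => (hstep i hi).levelSuppIsClique hpeo ih) hSn_clique hi

/-- let `P` be a finite chordal polynomial set whose natural variable
ordering is a perfect elimination ordering, and let the sets `S i` (`i = n, ..., 0`,
with `S n = P` and `S i = red_{i+1}(S (i+1))`) be obtained from `P` by any sequence
of reduction steps.  Then for each `i ≤ n` and any two distinct variables
`x_p, x_q` lying in `supp ((S i)^(k))` for some `k`, `{x_p, x_q}` is an edge of
`G(P)`. -/
theorem statement3 {K : Type*} [Field K] {n : ℕ}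
    (P : Set (MvPolynomial (Fin n) K)) (hfin : P.Finite) (hpeo : isPEO P)
    (S : ℕ → Set (MvPolynomial (Fin n) K)) (hSn : S n = P)
    (hstep : ∀ i (h : i < n), RedStepAny ⟨i, h⟩ (S (i + 1)) (S i)) :
    ∀ i ≤ n, ∀ k p q : Fin n, p ≠ q →
      p ∈ ssupp (levelSet (S i) k) → q ∈ ssupp (levelSet (S i) k) →
      adjG P p q :=
  statement3_general P hpeo S hSn hstep
end

section
/- Let P be a finite chordal polynomial set in K[x_1,...,x_n] such that x_1 < ... < x_n is a perfect elimination ordering of G(P), and let red̄_1(P) be obtained from P by any sequence of reduction steps red_n, ..., red_1. If red̄_1(P) contains no nonzero constant polynomial, then the nonzero elements of red̄_1(P), ordered by their leading variables, form a triangular set T such that G(T) ⊆ G(P). -/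
open MvPolynomial

variable {K : Type*} [Field K] {n : ℕ}

/-- A triangular set: a list of nonconstant polynomials with strictly increasing
leading variables. -/
def IsTriangularSet (L : List (MvPolynomial (Fin n) K)) : Prop :=
  (∀ F ∈ L, (psupp F).Nonempty) ∧
    L.Chain' fun F G => ∃ a b, hasLv F a ∧ hasLv G b ∧ a < b

/-!
Each reduction step at level `i` leaves exactly one polynomial with leading variable `x_i`
and never creates polynomials of a higher level, so after all steps every level holds at
most one polynomial; listing them level by level gives the triangular set. For the
graph, every new polynomial lives on `supp (P^(i))`, and this set is a clique of the
current graph: its vertices other than `x_i` are smaller neighbours of `x_i`, which are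
pairwise adjacent in `G(P)` by the perfect elimination ordering. Hence `G ⊆ G(P)` is
preserved by every step.
-/

lemma hasLv.unique_s5 {F : MvPolynomial (Fin n) K} {a b : Fin n}
    (ha : hasLv F a) (hb : hasLv F b) : a = b :=
  le_antisymm (hb.2 a ha.1) (ha.2 b hb.1)

lemma exists_hasLv {F : MvPolynomial (Fin n) K} (h : (psupp F).Nonempty) :
    ∃ k, hasLv F k :=
  ⟨F.vars.max' h, F.vars.max'_mem h, fun j hj => F.vars.le_max' j hj⟩

lemma psupp_subset_ssupp {R : Set (MvPolynomial (Fin n) K)} {F : MvPolynomial (Fin n) K}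
    (hF : F ∈ R) : psupp F ⊆ ssupp R := fun _ hk => Set.mem_biUnion hF hk

lemma mem_ssupp_levelSet {P : Set (MvPolynomial (Fin n) K)} {i k : Fin n} :
    k ∈ ssupp (levelSet P i) ↔ ∃ G ∈ levelSet P i, k ∈ psupp G := by
  simp only [ssupp, Set.mem_iUnion, exists_prop]

lemma le_of_mem_ssupp_levelSet {P : Set (MvPolynomial (Fin n) K)} {i k : Fin n}
    (h : k ∈ ssupp (levelSet P i)) : k ≤ i := by
  obtain ⟨G, hG, hk⟩ := mem_ssupp_levelSet.mp h
  exact hG.2.2 k hk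

lemma subG_refl (P : Set (MvPolynomial (Fin n) K)) : subG P P := fun _ _ h => h

lemma subG_of_subset {P Q R : Set (MvPolynomial (Fin n) K)} (hPQ : P ⊆ Q)
    (hQR : subG Q R) : subG P R := by
  rintro p q ⟨hne, F, hF, hp, hq⟩
  exact hQR p q ⟨hne, F, hPQ hF, hp, hq⟩

lemma adjG_of_mem_levelSet {P : Set (MvPolynomial (Fin n) K)} {F : MvPolynomial (Fin n) K}
    {i p : Fin n} (hF : F ∈ levelSet P i) (hp : p ∈ psupp F) (hpi : p ≠ i) : adjG P p i :=
  ⟨hpi, F, hF.1, hp, hF.2.1⟩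

lemma adjG_of_mem_ssupp_levelSet {P Q : Set (MvPolynomial (Fin n) K)} {i p q : Fin n}
    (hpeo : isPEO P) (hQP : subG Q P) (hne : p ≠ q)
    (hp : p ∈ ssupp (levelSet Q i)) (hq : q ∈ ssupp (levelSet Q i)) : adjG P p q := by
  obtain ⟨Fp, hFp, hpFp⟩ := mem_ssupp_levelSet.mp hp
  obtain ⟨Fq, hFq, hqFq⟩ := mem_ssupp_levelSet.mp hq
  by_cases hpi : p = i
  · subst hpi
    exact hQP p q ⟨hne, Fq, hFq.1, hFq.2.1, hqFq⟩
  by_cases hqi : q = i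
  · subst hqi
    exact hQP p q ⟨hne, Fp, hFp.1, hpFp, hFp.2.1⟩
  exact hpeo p q i (lt_of_le_of_ne (le_of_mem_ssupp_levelSet hp) hpi)
    (lt_of_le_of_ne (le_of_mem_ssupp_levelSet hq) hqi) hne
    (hQP p i (adjG_of_mem_levelSet hFp hpFp hpi))
    (hQP q i (adjG_of_mem_levelSet hFq hqFq hqi))

namespace RedStepAny

variable {i : Fin n} {P P' : Set (MvPolynomial (Fin n) K)}

lemma levelSet_subsingleton (h : RedStepAny i P P') : (levelSet P' i).Subsingleton := by
  rcases h with ⟨he, rfl⟩ | ⟨T, R, -, -, -, hRs, rfl⟩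
  · rw [he]
    exact Set.subsingleton_empty
  have eq_T : ∀ F ∈ levelSet ((P \ levelSet P i) ∪ {T} ∪ R) i, F = T := by
    rintro F ⟨(hF | hF) | hF, hlv⟩
    · exact absurd ⟨hF.1, hlv⟩ hF.2
    · exact hF
    · exact absurd rfl (hRs (psupp_subset_ssupp hF hlv.1)).2
  intro F hF G hG
  rw [eq_T F hF, eq_T G hG]

lemma levelSet_subset_of_lt {k : Fin n} (h : RedStepAny i P P') (hik : i < k) :
    levelSet P' k ⊆ levelSet P k := by
  rcases h with ⟨-, rfl⟩ | ⟨T, R, hT, -, -, hRs, rfl⟩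
  · exact subset_rfl
  rintro F ⟨(hF | hF) | hF, hlv⟩
  · exact ⟨hF.1, hlv⟩
  · rw [Set.mem_singleton_iff.mp hF] at hlv
    exact absurd (hT.unique_s5 hlv) hik.ne
  · have hkP := (hRs (psupp_subset_ssupp hF hlv.1)).1
    exact absurd (le_of_mem_ssupp_levelSet hkP) hik.not_ge

lemma subG {Q : Set (MvPolynomial (Fin n) K)} (hpeo : isPEO Q) (hPQ : subG P Q)
    (h : RedStepAny i P P') : subG P' Q := by
  rcases h with ⟨-, rfl⟩ | ⟨T, R, -, hTs, -, hRs, rfl⟩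
  · exact hPQ
  rintro p q ⟨hne, F, (hF | hF) | hF, hp, hq⟩
  · exact hPQ p q ⟨hne, F, hF.1, hp, hq⟩
  · rw [Set.mem_singleton_iff.mp hF] at hp hq
    exact adjG_of_mem_ssupp_levelSet hpeo hPQ hne (hTs hp) (hTs hq)
  · exact adjG_of_mem_ssupp_levelSet hpeo hPQ hne
      (hRs (psupp_subset_ssupp hF hp)).1 (hRs (psupp_subset_ssupp hF hq)).1

end RedStepAny

lemma exists_isTriangularSet {Z : Set (MvPolynomial (Fin n) K)}
    (hnc : ∀ F ∈ Z, (psupp F).Nonempty) (hlevel : ∀ k, (levelSet Z k).Subsingleton) :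
    ∃ L : List (MvPolynomial (Fin n) K), (∀ F, F ∈ L ↔ F ∈ Z) ∧ IsTriangularSet L := by
  classical
  let pick : Fin n → Option (MvPolynomial (Fin n) K) := fun k =>
    if h : (levelSet Z k).Nonempty then some h.some else none
  have pick_eq_some {k F} : pick k = some F ↔ F ∈ levelSet Z k := by
    by_cases h : (levelSet Z k).Nonempty
    · simp only [pick, dif_pos h, Option.some.injEq]
      exact ⟨fun hF => hF ▸ h.some_mem, fun hF => hlevel k h.some_mem hF⟩
    · simp only [pick, dif_neg h, reduceCtorEq, false_iff]
      exact fun hF => h ⟨F, hF⟩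
  refine ⟨(List.finRange n).filterMap pick, fun F => ?_, fun F hF => ?_, ?_⟩
  · simp only [List.mem_filterMap, List.mem_finRange, true_and, pick_eq_some]
    refine ⟨fun ⟨k, hF⟩ => hF.1, fun hF => ?_⟩
    obtain ⟨k, hk⟩ := exists_hasLv (hnc F hF)
    exact ⟨k, hF, hk⟩
  · obtain ⟨k, hF⟩ := List.mem_filterMap.mp hF
    exact ⟨k, (pick_eq_some.mp hF.2).2.1⟩
  · refine List.Pairwise.isChain (List.pairwise_filterMap.mpr ?_)
    refine (List.pairwise_lt_finRange n).imp fun {a b} hab F hF G hG => ?_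
    exact ⟨a, b, (pick_eq_some.mp hF).2, (pick_eq_some.mp hG).2, hab⟩

theorem statement5_general {K : Type*} [Field K] {n : ℕ}
    (P : Set (MvPolynomial (Fin n) K)) (hpeo : isPEO P)
    (S : ℕ → Set (MvPolynomial (Fin n) K)) (hSn : S n = P)
    (hstep : ∀ i (h : i < n), RedStepAny ⟨i, h⟩ (S (i + 1)) (S i))
    (hnc : ∀ F ∈ S 0, psupp F = ∅ → F = 0) :
    ∃ L : List (MvPolynomial (Fin n) K),
      (∀ F, F ∈ L ↔ F ∈ S 0 ∧ F ≠ 0) ∧ IsTriangularSet L ∧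
      subG {F | F ∈ L} P := by
  have hsub : subG (S 0) P :=
    Nat.decreasingInduction (motive := fun m _ => subG (S m) P)
      (fun i hi ih => (hstep i hi).subG hpeo ih) (hSn ▸ subG_refl P) n.zero_le
  have hlevel (k : Fin n) : (levelSet (S 0) k).Subsingleton :=
    Nat.decreasingInduction (motive := fun m _ => (levelSet (S m) k).Subsingleton)
      (fun j hj ih => ih.anti ((hstep j (hj.trans k.isLt)).levelSet_subset_of_lt hj))
      (hstep k k.isLt).levelSet_subsingleton k.val.zero_le
  obtain ⟨L, hmem, htri⟩ := exists_isTriangularSet (Z := {F | F ∈ S 0 ∧ F ≠ 0})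
    (fun F hF => Set.nonempty_iff_ne_empty.mpr fun h => hF.2 (hnc F hF.1 h))
    (fun k => (hlevel k).anti fun F hF => ⟨hF.1.1, hF.2⟩)
  exact ⟨L, hmem, htri, subG_of_subset (fun F hF => ((hmem F).mp hF).1) hsub⟩

/-- let `P` be a finite chordal polynomial set whose natural variable
ordering is a perfect elimination ordering, and let `red̄_1(P) = S 0` be obtained
from `P` by any sequence of reduction steps (`S n = P`, `S i = red_{i+1}(S (i+1))`).
If `S 0` contains no nonzero constant polynomial, then its nonzero elements, ordered
by their leading variables, form a triangular set `L` with `G(L) ⊆ G(P)`. -/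
theorem statement5 {K : Type*} [Field K] {n : ℕ}
    (P : Set (MvPolynomial (Fin n) K)) (hfin : P.Finite) (hpeo : isPEO P)
    (S : ℕ → Set (MvPolynomial (Fin n) K)) (hSn : S n = P)
    (hstep : ∀ i (h : i < n), RedStepAny ⟨i, h⟩ (S (i + 1)) (S i))
    (hnc : ∀ F ∈ S 0, psupp F = ∅ → F = 0) :
    ∃ L : List (MvPolynomial (Fin n) K),
      (∀ F, F ∈ L ↔ F ∈ S 0 ∧ F ≠ 0) ∧ IsTriangularSet L ∧
      subG {F | F ∈ L} P :=
  statement5_general P hpeo S hSn hstep hnc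
end

section
/- Let F be a finite chordal polynomial set in K[x_1,...,x_n] such that x_1 < ... < x_n is a perfect elimination ordering of G(F). If a pair (P, Q) of finite polynomial sets is obtained from the pair (F, ∅) by finitely many subresultant-based steps and the nonzero elements of P are nonconstant with pairwise distinct leading variables, so that they form a triangular set T when ordered by leading variable, then G(T) ⊆ G(F). -/
open MvPolynomial

variable {K : Type*} [Field K] {n : ℕ}

/-- A subresultant-based step: transform a pair `(P, Q)` of polynomial sets by
choosing `k` with `P^(k) ≠ ∅`, and either (right branch) choosing `T ∈ P^(k)` and
polynomials `I, R'` supported in `supp T` and passing to `((P \ {T}) ∪ {I, R'}, Q)`;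
or (subresultant branch) choosing distinct `T₁, T₂ ∈ P^(k)`, polynomials
`H_2, ..., H_r` with `supp (H m) ⊆ supp T₁ ∪ supp T₂`, polynomials `I_2, ..., I_r`
with `supp (I m) ⊆ supp (H m)`, a polynomial `J` with `supp J ⊆ supp T₂`, and
`2 ≤ i ≤ r`, and passing to
`((P \ {T₁, T₂}) ∪ {H i, I_{i+1}, ..., I_r}, Q ∪ {J, I i})`
(which for `i = r` is `((P \ {T₁, T₂}) ∪ {H r}, Q ∪ {J, I r})`). -/
def SubresStep (PQ PQ' :
    Set (MvPolynomial (Fin n) K) × Set (MvPolynomial (Fin n) K)) : Prop :=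
  ∃ k : Fin n,
    (∃ T ∈ levelSet PQ.1 k, ∃ I R' : MvPolynomial (Fin n) K,
        psupp I ⊆ psupp T ∧ psupp R' ⊆ psupp T ∧
        PQ'.1 = (PQ.1 \ {T}) ∪ {I, R'} ∧ PQ'.2 = PQ.2) ∨
    (∃ T₁ T₂ : MvPolynomial (Fin n) K, T₁ ≠ T₂ ∧
        T₁ ∈ levelSet PQ.1 k ∧ T₂ ∈ levelSet PQ.1 k ∧
      ∃ (r : ℕ) (H I : ℕ → MvPolynomial (Fin n) K) (J : MvPolynomial (Fin n) K)
          (i : ℕ), 2 ≤ i ∧ i ≤ r ∧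
        (∀ m, 2 ≤ m → m ≤ r → psupp (H m) ⊆ psupp T₁ ∪ psupp T₂) ∧
        (∀ m, 2 ≤ m → m ≤ r → psupp (I m) ⊆ psupp (H m)) ∧
        psupp J ⊆ psupp T₂ ∧
        PQ'.1 = (PQ.1 \ {T₁, T₂}) ∪ {H i} ∪ (I '' {m | i < m ∧ m ≤ r}) ∧
        PQ'.2 = PQ.2 ∪ {J, I i})

/-!
Every subresultant-based step replaces polynomials by polynomials supported in the support
of one input polynomial `T`, or in `supp T₁ ∪ supp T₂` for two polynomials with the same
leading variable `x_k`. Hence the invariant "the support of every polynomial of `P` is a clique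
of `G(F)`" propagates along the decomposition: `supp T₁ ∪ supp T₂` is again a clique because
any `x_p ∈ supp T₁` and `x_q ∈ supp T₂` below `x_k` are both earlier neighbours of `x_k`, which
are pairwise adjacent since the ordering is a perfect elimination ordering. At the end,
`G(T) ⊆ G(F)` is exactly this invariant.
-/

namespace SimpleGraph

variable {α : Type*} [LinearOrder α] {G : SimpleGraph α}

def IsPerfectEliminationOrder (G : SimpleGraph α) : Prop :=
  ∀ p q k : α, p < k → q < k → p ≠ q → G.Adj p k → G.Adj q k → G.Adj p q

theorem IsPerfectEliminationOrder.isClique_union (hG : G.IsPerfectEliminationOrder)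
    {s t : Set α} {k : α} (hks : IsGreatest s k) (hkt : IsGreatest t k)
    (hs : G.IsClique s) (ht : G.IsClique t) : G.IsClique (s ∪ t) := by
  have : Std.Symm G.Adj := G.symm
  rw [IsClique, Set.pairwise_union_of_symm]
  refine ⟨hs, ht, fun p hp q hq hpq => ?_⟩
  rcases (hks.2 hp).eq_or_lt with rfl | hpk
  · exact ht hkt.1 hq hpq
  rcases (hkt.2 hq).eq_or_lt with rfl | hqk
  · exact hs hp hks.1 hpq
  exact hG p q k hpk hqk hpq (hs hp hks.1 hpk.ne) (ht hq hkt.1 hqk.ne)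

end SimpleGraph

def assocGraph (P : Set (MvPolynomial (Fin n) K)) : SimpleGraph (Fin n) where
  Adj := adjG P
  symm := ⟨fun _ _ h => ⟨h.1.symm, h.2.imp fun _ hF => ⟨hF.1, hF.2.2, hF.2.1⟩⟩⟩
  loopless := ⟨fun _ h => h.1 rfl⟩

theorem isPerfectEliminationOrder_assocGraph {P : Set (MvPolynomial (Fin n) K)}
    (hP : isPEO P) : (assocGraph P).IsPerfectEliminationOrder :=
  hP

theorem subG_of_forall_isClique {P Fs : Set (MvPolynomial (Fin n) K)}
    (h : ∀ F ∈ P, (assocGraph Fs).IsClique (psupp F)) : subG P Fs := by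
  rintro p q ⟨hpq, F, hF, hp, hq⟩
  exact h F hF hp hq hpq

theorem isClique_psupp_of_mem {P : Set (MvPolynomial (Fin n) K)}
    {F : MvPolynomial (Fin n) K} (hF : F ∈ P) : (assocGraph P).IsClique (psupp F) :=
  fun _ hp _ hq hpq => ⟨hpq, F, hF, hp, hq⟩

theorem hasLv_iff_max_eq {F : MvPolynomial (Fin n) K} {k : Fin n} :
    hasLv F k ↔ F.vars.max = k :=
  ⟨fun h => le_antisymm (Finset.max_le fun j hj => WithBot.coe_le_coe.2 (h.2 j hj))
      (Finset.le_max h.1),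
    fun h => ⟨Finset.mem_of_max h, fun _ hj => Finset.le_max_of_eq hj h⟩⟩

namespace SubresStep

variable {PQ PQ' : Set (MvPolynomial (Fin n) K) × Set (MvPolynomial (Fin n) K)}

theorem finite_fst (h : SubresStep PQ PQ') (hP : PQ.1.Finite) : PQ'.1.Finite := by
  obtain ⟨k, ⟨T, -, I, R', -, -, hP', -⟩ |
    ⟨T₁, T₂, -, -, -, r, H, I, J, i, -, -, -, -, -, hP', -⟩⟩ := h
  · rw [hP']
    exact hP.sdiff.union (Set.toFinite _)
  · rw [hP']
    exact (hP.sdiff.union (Set.toFinite _)).union ((Set.finite_Ioc i r).image I)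

theorem isClique_psupp {G : SimpleGraph (Fin n)} (hG : G.IsPerfectEliminationOrder)
    (h : SubresStep PQ PQ') (hP : ∀ F ∈ PQ.1, G.IsClique (psupp F)) :
    ∀ F ∈ PQ'.1, G.IsClique (psupp F) := by
  obtain ⟨k, ⟨T, hT, I, R', hI, hR', hP', -⟩ |
    ⟨T₁, T₂, -, hT₁, hT₂, r, H, I, J, i, hi, hir, hH, hIH, -, hP', -⟩⟩ := h
  · rw [hP']
    rintro F (hF | rfl | rfl)
    · exact hP F hF.1
    · exact (hP T hT.1).subset hI
    · exact (hP T hT.1).subset hR'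
  · have hHm : ∀ m, 2 ≤ m → m ≤ r → G.IsClique (psupp (H m)) := fun m h2 hr =>
      (hG.isClique_union hT₁.2 hT₂.2 (hP _ hT₁.1) (hP _ hT₂.1)).subset (hH m h2 hr)
    rw [hP']
    rintro F ((hF | rfl) | ⟨m, ⟨him, hmr⟩, rfl⟩)
    · exact hP F hF.1
    · exact hHm i hi hir
    · exact (hHm m (hi.trans him.le) hmr).subset (hIH m (hi.trans him.le) hmr)

end SubresStep

theorem finite_and_isClique_of_reflTransGen_subresStep {G : SimpleGraph (Fin n)}
    (hG : G.IsPerfectEliminationOrder)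
    {PQ PQ' : Set (MvPolynomial (Fin n) K) × Set (MvPolynomial (Fin n) K)}
    (h : Relation.ReflTransGen SubresStep PQ PQ') (hfin : PQ.1.Finite)
    (hcl : ∀ F ∈ PQ.1, G.IsClique (psupp F)) :
    PQ'.1.Finite ∧ ∀ F ∈ PQ'.1, G.IsClique (psupp F) := by
  induction h with
  | refl => exact ⟨hfin, hcl⟩
  | tail _ step ih => exact ⟨step.finite_fst ih.1, step.isClique_psupp hG ih.2⟩

theorem exists_isTriangularSet_of_finite {S : Set (MvPolynomial (Fin n) K)} (hS : S.Finite)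
    (hnc : ∀ F ∈ S, (psupp F).Nonempty)
    (hdist : ∀ F ∈ S, ∀ G ∈ S, F ≠ G → ∀ a b : Fin n, hasLv F a → hasLv G b → a ≠ b) :
    ∃ L : List (MvPolynomial (Fin n) K), (∀ F, F ∈ L ↔ F ∈ S) ∧ IsTriangularSet L := by
  classical
  set L := hS.toFinset.toList.mergeSort fun F G => decide (F.vars.max ≤ G.vars.max)
  have hmem : ∀ F, F ∈ L ↔ F ∈ S := by simp [L]
  have hsorted : L.Pairwise fun F G => F.vars.max ≤ G.vars.max := by
    simpa only [decide_eq_true_eq] using List.pairwise_mergeSort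
      (le := fun F G : MvPolynomial (Fin n) K => decide (F.vars.max ≤ G.vars.max))
      (fun _ _ _ hab hbc => by simp only [decide_eq_true_eq] at *; exact hab.trans hbc)
      (fun F G => by simpa only [Bool.or_eq_true, decide_eq_true_eq] using le_total _ _)
      hS.toFinset.toList
  have hnodup : L.Nodup := (List.mergeSort_perm _ _).nodup_iff.2 (Finset.nodup_toList _)
  refine ⟨L, hmem, fun F hF => hnc F ((hmem F).1 hF),
    ((hsorted.and hnodup).imp_of_mem ?_).isChain⟩
  rintro F G hF hG ⟨hle, hne⟩
  rw [hmem] at hF hG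
  obtain ⟨a, ha⟩ := Finset.max_of_nonempty (Finset.coe_nonempty.1 (hnc F hF))
  obtain ⟨b, hb⟩ := Finset.max_of_nonempty (Finset.coe_nonempty.1 (hnc G hG))
  rw [ha, hb, WithBot.coe_le_coe] at hle
  rw [← hasLv_iff_max_eq] at ha hb
  exact ⟨a, b, ha, hb, hle.lt_of_ne (hdist F hF G hG hne a b ha hb)⟩

/-- let `Fs` be a finite chordal polynomial set whose natural variable
ordering is a perfect elimination ordering, and let `(P, Q)` be obtained from
`(Fs, ∅)` by finitely many subresultant-based steps.  If the nonzero elements of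
`P` are nonconstant with pairwise distinct leading variables, then they form,
ordered by leading variable, a triangular set `L` with `G(L) ⊆ G(Fs)`. -/
theorem statement12 {K : Type*} [Field K] {n : ℕ}
    (Fs : Set (MvPolynomial (Fin n) K)) (hFfin : Fs.Finite) (hpeo : isPEO Fs)
    (P Q : Set (MvPolynomial (Fin n) K))
    (h : Relation.ReflTransGen SubresStep (Fs, ∅) (P, Q))
    (hnc : ∀ G ∈ P, G ≠ 0 → (psupp G).Nonempty)
    (hdist : ∀ G ∈ P, ∀ H ∈ P, G ≠ 0 → H ≠ 0 → G ≠ H →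
      ∀ a b : Fin n, hasLv G a → hasLv H b → a ≠ b) :
    ∃ L : List (MvPolynomial (Fin n) K),
      (∀ G, G ∈ L ↔ G ∈ P ∧ G ≠ 0) ∧ IsTriangularSet L ∧
      subG {G | G ∈ L} Fs := by
  obtain ⟨hPfin, hPclique⟩ := finite_and_isClique_of_reflTransGen_subresStep
    (isPerfectEliminationOrder_assocGraph hpeo) h hFfin fun _ hF => isClique_psupp_of_mem hF
  obtain ⟨L, hmem, hL⟩ := exists_isTriangularSet_of_finite (S := {G | G ∈ P ∧ G ≠ 0})
    (hPfin.subset fun _ hG => hG.1) (fun G hG => hnc G hG.1 hG.2)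
    fun G hG H hH hne => hdist G hG.1 H hH.1 hG.2 hH.2 hne
  exact ⟨L, hmem, hL, subG_of_forall_isClique fun F hF => hPclique F ((hmem F).1 hF).1⟩
end
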